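/- For nonnegative random variables T_1, …, T_k with finite second moments, E[max_{i=1,…,k} T_i] ≤ max_{i} E[T_i] + sqrt(((k-1)/k) · Σ_{i=1}^k Var(T_i)). -/

import Mathlib

/-!
For every constant `a`, pointwise `max_i T_i ≤ max_i E[T_i] + a + √(∑ i, (T_i - (E[T_i] + a))²)`.
Integrating, and applying Jensen's inequality to the concave square root, gives
`E[max_i T_i] ≤ max_i E[T_i] + a + √(S + k a²)` with `S = ∑ i, Var(T_i)`. For `k ≥ 2` the
minimiser `a = -√(S / (k (k - 1)))` turns `a + √(S + k a²)` into `√((k - 1) / k · S)`;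
for `k = 1` the maximum is the single variable itself.
-/

open MeasureTheory ProbabilityTheory

section

variable {Ω ι : Type*} [MeasurableSpace Ω] {μ : Measure Ω}

theorem Finset.sup'_le_sup'_add_sqrt_sum_sq (s : Finset ι) (hs : s.Nonempty) (x m : ι → ℝ)
    (a : ℝ) :
    s.sup' hs x ≤ s.sup' hs m + a + √(∑ i ∈ s, (x i - (m i + a)) ^ 2) := by
  refine Finset.sup'_le _ _ fun i hi => ?_
  have hm : m i ≤ s.sup' hs m := Finset.le_sup' m hi
  have hx : |x i - (m i + a)| ≤ √(∑ j ∈ s, (x j - (m j + a)) ^ 2) :=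
    Real.abs_le_sqrt (Finset.single_le_sum (f := fun j => (x j - (m j + a)) ^ 2)
      (fun j _ => sq_nonneg _) hi)
  linarith [le_abs_self (x i - (m i + a))]

theorem exists_add_sqrt_add_mul_sq_eq {K S : ℝ} (hK : 1 < K) (hS : 0 ≤ S) :
    ∃ a : ℝ, a + √(S + K * a ^ 2) = √((K - 1) / K * S) := by
  have hK0 : 0 < K - 1 := sub_pos.2 hK
  set u := √(S / (K * (K - 1)))
  have hu0 : 0 ≤ u := Real.sqrt_nonneg _
  have hu : u ^ 2 = S / (K * (K - 1)) :=
    Real.sq_sqrt (div_nonneg hS (mul_pos (by linarith) hK0).le)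
  have h1 : S + K * (-u) ^ 2 = (K * u) ^ 2 := by
    rw [neg_sq, mul_pow, hu]; field_simp; ring
  have h2 : (K - 1) / K * S = ((K - 1) * u) ^ 2 := by
    rw [mul_pow, hu]; field_simp
  refine ⟨-u, ?_⟩
  rw [h1, h2, Real.sqrt_sq (mul_nonneg (by linarith) hu0), Real.sqrt_sq (mul_nonneg hK0.le hu0)]
  ring

theorem Finset.integrable_sup' {s : Finset ι} (hs : s.Nonempty) {f : ι → Ω → ℝ}
    (hf : ∀ i ∈ s, Integrable (f i) μ) : Integrable (s.sup' hs f) μ :=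
  Finset.sup'_induction hs f (p := fun g => Integrable g μ) (fun _ hg _ hh => hg.sup hh) hf

theorem MeasureTheory.Integrable.sqrt [IsFiniteMeasure μ] {f : Ω → ℝ} (hf : Integrable f μ)
    (hf0 : 0 ≤ᵐ[μ] f) : Integrable (fun ω => √(f ω)) μ := by
  have hsq : Integrable (fun ω => √(f ω) ^ 2) μ :=
    hf.congr (hf0.mono fun ω h => (Real.sq_sqrt h).symm)
  exact ((memLp_two_iff_integrable_sq
    (Real.continuous_sqrt.comp_aestronglyMeasurable hf.aestronglyMeasurable)).2 hsq).integrable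
    one_le_two

theorem integral_sqrt_le_sqrt_integral [IsProbabilityMeasure μ] {f : Ω → ℝ}
    (hf : Integrable f μ) (hf0 : 0 ≤ᵐ[μ] f) : ∫ ω, √(f ω) ∂μ ≤ √(∫ ω, f ω ∂μ) :=
  Real.strictConcaveOn_sqrt.concaveOn.le_map_integral Real.continuous_sqrt.continuousOn
    isClosed_Ici hf0 hf (hf.sqrt hf0)

theorem integral_sub_const_sq_eq_variance_add [IsProbabilityMeasure μ] {X : Ω → ℝ}
    (hX : MemLp X 2 μ) (b : ℝ) :
    ∫ ω, (X ω - b) ^ 2 ∂μ = variance X μ + (∫ ω, X ω ∂μ - b) ^ 2 := by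
  have h := variance_eq_sub (X := fun ω => X ω - b) (hX.sub (memLp_const b))
  rw [variance_sub_const hX.aestronglyMeasurable] at h
  rw [h, integral_sub (hX.integrable one_le_two) (integrable_const b), integral_const]
  simp

theorem integral_sup'_le_sup'_integral_add_sqrt [IsProbabilityMeasure μ] {s : Finset ι}
    (hs : s.Nonempty) {T : ι → Ω → ℝ} (hT : ∀ i ∈ s, MemLp (T i) 2 μ) (a : ℝ) :
    ∫ ω, (s.sup' hs fun i => T i ω) ∂μ
      ≤ (s.sup' hs fun i => ∫ ω, T i ω ∂μ) + a
        + √(∑ i ∈ s, variance (T i) μ + s.card * a ^ 2) := by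
  set m : ι → ℝ := fun i => ∫ ω, T i ω ∂μ
  set D : Ω → ℝ := fun ω => ∑ i ∈ s, (T i ω - (m i + a)) ^ 2
  have hsq : ∀ i ∈ s, Integrable (fun ω => (T i ω - (m i + a)) ^ 2) μ := fun i hi =>
    ((hT i hi).sub (memLp_const _)).integrable_sq
  have hD : Integrable D μ := integrable_finsetSum _ hsq
  have hD0 : 0 ≤ᵐ[μ] D := ae_of_all _ fun ω => Finset.sum_nonneg fun i _ => sq_nonneg _
  have hED : ∫ ω, D ω ∂μ = ∑ i ∈ s, variance (T i) μ + s.card * a ^ 2 := by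
    rw [integral_finsetSum _ hsq,
      Finset.sum_congr rfl fun i hi => integral_sub_const_sq_eq_variance_add (hT i hi) (m i + a)]
    simp [m, Finset.sum_add_distrib]
  have hsup : Integrable (fun ω => s.sup' hs fun i => T i ω) μ := by
    refine (Finset.integrable_sup' hs fun i hi => (hT i hi).integrable one_le_two).congr
      (ae_of_all _ fun ω => ?_)
    exact Finset.sup'_apply hs T ω
  calc ∫ ω, (s.sup' hs fun i => T i ω) ∂μ ≤ ∫ ω, (s.sup' hs m + a + √(D ω)) ∂μ :=
        integral_mono hsup ((integrable_const _).add (hD.sqrt hD0))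
          fun ω => Finset.sup'_le_sup'_add_sqrt_sum_sq s hs _ m a
    _ = s.sup' hs m + a + ∫ ω, √(D ω) ∂μ := by
        rw [integral_add (integrable_const _) (hD.sqrt hD0), integral_const]; simp
    _ ≤ _ := by
        rw [← hED]; gcongr; exact integral_sqrt_le_sqrt_integral hD hD0

end

theorem aven_inequality_general
    {Ω ι : Type*} [MeasureSpace Ω] [IsProbabilityMeasure (ℙ : Measure Ω)]
    [Fintype ι] [Nonempty ι]
    (T : ι → Ω → ℝ)
    (hL2 : ∀ i, MemLp (T i) 2 ℙ) :
    ∫ ω, (Finset.univ.sup' Finset.univ_nonempty fun i => T i ω) ∂ℙ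
      ≤ (Finset.univ.sup' Finset.univ_nonempty fun i => ∫ ω, T i ω ∂ℙ)
        + Real.sqrt (((Fintype.card ι - 1 : ℝ) / Fintype.card ι) * ∑ i, variance (T i) ℙ) := by
  rcases Nat.lt_or_ge 1 (Fintype.card ι) with hK | hK
  · obtain ⟨a, ha⟩ := exists_add_sqrt_add_mul_sq_eq (K := Fintype.card ι) (by exact_mod_cast hK)
      (Finset.sum_nonneg fun i _ => variance_nonneg (T i) ℙ)
    have h := integral_sup'_le_sup'_integral_add_sqrt Finset.univ_nonempty (fun i _ => hL2 i) a
    rwa [Finset.card_univ, add_assoc, ha] at h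
  · have : Subsingleton ι := Fintype.card_le_one_iff_subsingleton.mp hK
    obtain ⟨i⟩ := ‹Nonempty ι›
    have hsup (f : ι → ℝ) : Finset.univ.sup' Finset.univ_nonempty f = f i :=
      Finset.sup'_eq_of_forall _ _ fun j _ => congrArg f (Subsingleton.elim j i)
    simp only [hsup]
    exact le_add_of_nonneg_right (Real.sqrt_nonneg _)

/-- Aven's inequality: for nonnegative random variables `T i` with finite second moments,
`E[max_i T_i] ≤ max_i E[T_i] + sqrt(((k-1)/k) * Σ_i Var(T_i))`. -/
theorem aven_inequality
    {Ω ι : Type*} [MeasureSpace Ω] [IsProbabilityMeasure (ℙ : Measure Ω)]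
    [Fintype ι] [Nonempty ι]
    (T : ι → Ω → ℝ) (hnn : ∀ i ω, 0 ≤ T i ω)
    (hL2 : ∀ i, MemLp (T i) 2 ℙ) :
    ∫ ω, (Finset.univ.sup' Finset.univ_nonempty fun i => T i ω) ∂ℙ
      ≤ (Finset.univ.sup' Finset.univ_nonempty fun i => ∫ ω, T i ω ∂ℙ)
        + Real.sqrt (((Fintype.card ι - 1 : ℝ) / Fintype.card ι) * ∑ i, variance (T i) ℙ) :=
  aven_inequality_general T hL2
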